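/- arXiv:2111.14104 — 4 statements merged into one kernel-verified Lean document; each statement's English description precedes it below -/
import Mathlib

section
/- Let t ∈ (0, 1/4]. Define W(t) = (t²/(1-2t) + t⁴/(1+t))·(1/(1-t²)) and W₀(t) = (t + t⁶)/(1 - t - t³). Then the limit as t → 0⁺ of W(t)/W₀(t) equals 0. -/
/-- The ratio of the partitioned-queue waiting time `W(t)` to the pooled-queue
waiting time `W₀(t)` tends to `0` as `t → 0⁺`. -/
theorem stmt_0 :
    Filter.Tendsto
      (fun t : ℝ =>
        ((t ^ 2 / (1 - 2 * t) + t ^ 4 / (1 + t)) * (1 / (1 - t ^ 2))) /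
          ((t + t ^ 6) / (1 - t - t ^ 3)))
      (nhdsWithin 0 (Set.Ioi 0)) (nhds 0) := by
  have hg : Filter.Tendsto
      (fun t : ℝ => t * ((1 / (1 - 2 * t) + t ^ 2 / (1 + t)) * (1 - t - t ^ 3) /
        ((1 - t ^ 2) * (1 + t ^ 5))))
      (nhdsWithin 0 (Set.Ioi 0)) (nhds 0) := by
    have : ContinuousAt (fun t : ℝ => t * ((1 / (1 - 2 * t) + t ^ 2 / (1 + t)) * (1 - t - t ^ 3) /
        ((1 - t ^ 2) * (1 + t ^ 5)))) 0 := by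
      fun_prop (disch := norm_num)
    have h := this.continuousWithinAt (s := Set.Ioi 0) |>.tendsto
    simpa using h
  refine hg.congr' ?_
  filter_upwards [Ioo_mem_nhdsGT_of_mem (by norm_num : (0:ℝ) ∈ Set.Ico 0 (1/4))] with t ht
  obtain ⟨ht0, ht4⟩ := ht
  have h1 : (1 : ℝ) - 2 * t > 0 := by linarith
  have h2 : (1 : ℝ) + t > 0 := by linarith
  have h3 : (1 : ℝ) - t ^ 2 > 0 := by nlinarith
  have h4 : (1 : ℝ) - t - t ^ 3 > 0 := by nlinarith
  have h5 : (1 : ℝ) + t ^ 5 > 0 := by nlinarith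
  have h6 : t + t ^ 6 > 0 := by nlinarith
  field_simp
end

section
/- For every ε > 0 there exists t ∈ (0, 1/4] such that (t²/(1-2t) + t⁴/(1+t))·(1/(1-t²)) < ε · (t + t⁶)/(1 - t - t³). -/
/-- Splitting the server can reduce the expected waiting time by an arbitrarily
large factor. -/
theorem stmt_1 :
    ∀ ε : ℝ, 0 < ε → ∃ t : ℝ, 0 < t ∧ t ≤ 1 / 4 ∧
      (t ^ 2 / (1 - 2 * t) + t ^ 4 / (1 + t)) * (1 / (1 - t ^ 2)) <
        ε * ((t + t ^ 6) / (1 - t - t ^ 3)) := by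
  intro ε hε
  refine ⟨min (1/4) (ε/7), lt_min (by norm_num) (by linarith), min_le_left _ _, ?_⟩
  set t := min (1/4) (ε/7) with ht
  have ht0 : 0 < t := lt_min (by norm_num) (by linarith)
  have ht4 : t ≤ 1/4 := min_le_left _ _
  have htε : t ≤ ε/7 := min_le_right _ _
  have h1 : (0:ℝ) < 1 - 2*t := by linarith
  have h2 : (0:ℝ) < 1 + t := by linarith
  have h3 : (0:ℝ) < 1 - t^2 := by nlinarith
  have h4 : (0:ℝ) < 1 - t - t^3 := by nlinarith
  have hL1 : t^2/(1-2*t) ≤ 2*t^2 := by rw [div_le_iff₀ h1]; nlinarith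
  have hL2 : t^4/(1+t) ≤ t^2 := by rw [div_le_iff₀ h2]; nlinarith
  have hL3 : 1/(1-t^2) ≤ 2 := by rw [div_le_iff₀ h3]; nlinarith
  have hc0 : (0:ℝ) ≤ 1/(1-t^2) := by positivity
  have ha0 : (0:ℝ) ≤ t^2/(1-2*t) := by positivity
  have hb0 : (0:ℝ) ≤ t^4/(1+t) := by positivity
  have hR : ε * t ≤ ε * ((t + t^6)/(1 - t - t^3)) := by
    apply mul_le_mul_of_nonneg_left _ hε.le
    rw [le_div_iff₀ h4]; nlinarith [sq_nonneg t, sq_nonneg (t^2), sq_nonneg (t^3)]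
  have hmain : (t^2/(1-2*t) + t^4/(1+t)) * (1/(1-t^2)) ≤ 6 * t^2 := by
    calc (t^2/(1-2*t) + t^4/(1+t)) * (1/(1-t^2))
        ≤ (2*t^2 + t^2) * 2 := by
          apply mul_le_mul (by linarith) hL3 hc0 (by positivity)
      _ = 6 * t^2 := by ring
  have : 6 * t^2 < ε * t := by nlinarith
  linarith
end

section
/- Fix positive reals λᵢ, μᵢ for i = 1,…,n, fix α ∈ (0,1), fix an index j, and fix xᵢ ∈ [0,1] for all i ≠ j. Define h(xⱼ) = (Σᵢ λᵢxᵢ/μᵢ²)·(Σᵢ λᵢxᵢ) / (α² − α·Σᵢ λᵢxᵢ/μᵢ) + (Σᵢ λᵢ(1−xᵢ)/μᵢ²)·(Σᵢ λᵢ(1−xᵢ)) / ((1−α)² − (1−α)·Σᵢ λᵢ(1−xᵢ)/μᵢ). Then h is convex in xⱼ on the set of xⱼ ∈ [0,1] for which Σᵢ λᵢxᵢ/μᵢ < α and Σᵢ λᵢ(1−xᵢ)/μᵢ < 1−α. -/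
/-!
Along the line `v ↦ update x j v` every sum in `h` is affine in `v`, so each queue contributes
`f = A * B / D` with `A`, `B`, `D` affine of slopes `a`, `b`, `d` and `D > 0`. For
`z = s p + t q` with `s + t = 1`,
`s f p + t f q - f z = s t (p - q)² (a D - A d) (b D - B d) / (D p * D q * D z)`
with `A`, `B`, `D` evaluated at `p` on the right, so `f` is convex as soon as `A / D` and `B / D`
are monotone in the same direction. Raising `x j` increases both numerator factors of the first
queue and decreases its denominator, and does the reverse for the second queue.
-/

open Finset Function Set

theorem sum_apply_update_sub_eq_mul {ι R : Type*} [Fintype ι] [DecidableEq ι] [Ring R]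
    (g : ι → R → R) (x : ι → R) (j : ι) {a : R} (hg : ∀ u v, g j v - g j u = a * (v - u))
    (u v : R) : ∑ i, g i (update x j v i) - ∑ i, g i (update x j u i) = a * (v - u) := by
  rw [← sum_sub_distrib, sum_eq_single j (fun i _ hi => by simp [update_of_ne hi]) (by simp)]
  simpa using hg u v

theorem update_apply_mem {ι β : Type*} [DecidableEq ι] {s : Set β} {x : ι → β} {j : ι} {v : β}
    (hx : ∀ i, i ≠ j → x i ∈ s) (hv : v ∈ s) (i : ι) : update x j v i ∈ s := by
  rcases eq_or_ne i j with rfl | hi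
  · simpa
  · simpa [update_of_ne hi] using hx i hi

theorem apply_combo_of_slope {A : ℝ → ℝ} {a s t : ℝ} (hA : ∀ u v, A v - A u = a * (v - u))
    (hst : s + t = 1) (p q : ℝ) : A (s * p + t * q) = s * A p + t * A q := by
  obtain rfl : s = 1 - t := by linarith
  linear_combination hA p ((1 - t) * p + t * q) - t * hA p q

theorem convex_setOf_lt_of_slope {C : ℝ → ℝ} {c : ℝ} (hC : ∀ u v, C v - C u = c * (v - u))
    (r : ℝ) : Convex ℝ {v | C v < r} := by
  intro p hp q hq s t hs ht hst
  show C (s * p + t * q) < r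
  rw [apply_combo_of_slope hC hst]
  exact convex_Iio r hp hq hs ht hst

theorem mul_div_le_combo_of_cross_nonneg {s t Ap Aq Bp Bq Dp Dq : ℝ} (hs : 0 ≤ s) (ht : 0 ≤ t)
    (hDp : 0 < Dp) (hDq : 0 < Dq) (hD : 0 < s * Dp + t * Dq)
    (hcross : 0 ≤ (Ap * Dq - Aq * Dp) * (Bp * Dq - Bq * Dp)) :
    (s * Ap + t * Aq) * (s * Bp + t * Bq) / (s * Dp + t * Dq) ≤
      s * (Ap * Bp / Dp) + t * (Aq * Bq / Dq) := by
  have gap : s * (Ap * Bp / Dp) + t * (Aq * Bq / Dq) -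
        (s * Ap + t * Aq) * (s * Bp + t * Bq) / (s * Dp + t * Dq) =
      s * t * ((Ap * Dq - Aq * Dp) * (Bp * Dq - Bq * Dp)) / (Dp * Dq * (s * Dp + t * Dq)) := by
    field_simp
    ring
  rw [← sub_nonneg, gap]
  positivity

theorem convexOn_mul_div_of_slope {S : Set ℝ} (hS : Convex ℝ S) {A B D : ℝ → ℝ} {a b d : ℝ}
    (hA : ∀ u v, A v - A u = a * (v - u)) (hB : ∀ u v, B v - B u = b * (v - u))
    (hD : ∀ u v, D v - D u = d * (v - u)) (hDpos : ∀ v ∈ S, 0 < D v)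
    (hcross : ∀ v ∈ S, 0 ≤ (a * D v - A v * d) * (b * D v - B v * d)) :
    ConvexOn ℝ S fun v => A v * B v / D v := by
  refine ⟨hS, fun p hp q hq s t hs ht hst => ?_⟩
  have hDz := hDpos _ (hS hp hq hs ht hst)
  simp only [smul_eq_mul] at hDz ⊢
  rw [apply_combo_of_slope hD hst] at hDz
  rw [apply_combo_of_slope hA hst, apply_combo_of_slope hB hst, apply_combo_of_slope hD hst]
  refine mul_div_le_combo_of_cross_nonneg hs ht (hDpos p hp) (hDpos q hq) hDz ?_
  have hAq : A q = A p + a * (q - p) := by linarith [hA p q]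
  have hBq : B q = B p + b * (q - p) := by linarith [hB p q]
  have hDq : D q = D p + d * (q - p) := by linarith [hD p q]
  have cross_eq : (A p * D q - A q * D p) * (B p * D q - B q * D p) =
      (p - q) ^ 2 * ((a * D p - A p * d) * (b * D p - B p * d)) := by
    rw [hAq, hBq, hDq]
    ring
  exact cross_eq ▸ mul_nonneg (sq_nonneg _) (hcross p hp)

theorem convexOn_mul_div_sq_sub_mul {S : Set ℝ} (hS : Convex ℝ S) {A B C : ℝ → ℝ}
    {a b c β : ℝ} (hA : ∀ u v, A v - A u = a * (v - u)) (hB : ∀ u v, B v - B u = b * (v - u))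
    (hC : ∀ u v, C v - C u = c * (v - u)) (hA0 : ∀ v ∈ S, 0 ≤ A v) (hB0 : ∀ v ∈ S, 0 ≤ B v)
    (hβ : 0 < β) (hCβ : ∀ v ∈ S, C v < β) (hab : 0 ≤ a * b) (hac : 0 ≤ a * c)
    (hbc : 0 ≤ b * c) :
    ConvexOn ℝ S fun v => A v * B v / (β ^ 2 - β * C v) := by
  have hDpos (v : ℝ) (hv : v ∈ S) : 0 < β ^ 2 - β * C v := by
    nlinarith [mul_pos hβ (sub_pos.2 (hCβ v hv))]
  refine convexOn_mul_div_of_slope hS hA hB (d := -(β * c))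
    (fun u v => by linear_combination -β * hC u v) hDpos fun v hv => ?_
  have hAv := hA0 v hv
  have hBv := hB0 v hv
  have hDv := (hDpos v hv).le
  nlinarith [mul_nonneg hab (sq_nonneg (β ^ 2 - β * C v)),
    mul_nonneg (mul_nonneg hac hβ.le) (mul_nonneg hBv hDv),
    mul_nonneg (mul_nonneg hbc hβ.le) (mul_nonneg hAv hDv),
    mul_nonneg (mul_nonneg hAv hBv) (sq_nonneg (β * c))]

/-- For fixed `α` and fixed routing of the other types, the two-queue expected
waiting time is convex in the routing probability `x j` on the stable region. -/
theorem stmt_3 (n : ℕ) (lam mu : Fin n → ℝ) (hlam : ∀ i, 0 < lam i)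
    (hmu : ∀ i, 0 < mu i) (α : ℝ) (hα : α ∈ Set.Ioo (0 : ℝ) 1)
    (j : Fin n) (x : Fin n → ℝ) (hx : ∀ i, i ≠ j → x i ∈ Set.Icc (0 : ℝ) 1) :
    ConvexOn ℝ
      {v : ℝ | v ∈ Set.Icc (0 : ℝ) 1 ∧
        (∑ i, lam i * Function.update x j v i / mu i) < α ∧
        (∑ i, lam i * (1 - Function.update x j v i) / mu i) < 1 - α}
      (fun v : ℝ =>
        (∑ i, lam i * Function.update x j v i / (mu i) ^ 2) *
            (∑ i, lam i * Function.update x j v i) /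
            (α ^ 2 - α * ∑ i, lam i * Function.update x j v i / mu i) +
          (∑ i, lam i * (1 - Function.update x j v i) / (mu i) ^ 2) *
            (∑ i, lam i * (1 - Function.update x j v i)) /
            ((1 - α) ^ 2 -
              (1 - α) * ∑ i, lam i * (1 - Function.update x j v i) / mu i)) := by
  obtain ⟨hα0, hα1⟩ := hα
  have hw₂ : 0 < lam j / mu j ^ 2 := div_pos (hlam j) (pow_pos (hmu j) 2)
  have hw₁ : 0 < lam j / mu j := div_pos (hlam j) (hmu j)
  have hload₁ := sum_apply_update_sub_eq_mul (fun i t => lam i * t / mu i) x j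
    (a := lam j / mu j) fun u v => by ring
  have hload₂ := sum_apply_update_sub_eq_mul (fun i t => lam i * (1 - t) / mu i) x j
    (a := -(lam j / mu j)) fun u v => by ring
  refine ConvexOn.add
    (convexOn_mul_div_sq_sub_mul ?convex
      (sum_apply_update_sub_eq_mul (fun i t => lam i * t / mu i ^ 2) x j
        (a := lam j / mu j ^ 2) fun u v => by ring)
      (sum_apply_update_sub_eq_mul (fun i t => lam i * t) x j (a := lam j) fun u v => by ring)
      hload₁
      (fun v hv => sum_nonneg fun i _ =>
        div_nonneg (mul_nonneg (hlam i).le (update_apply_mem hx hv.1 i).1) (sq_nonneg _))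
      (fun v hv => sum_nonneg fun i _ => mul_nonneg (hlam i).le (update_apply_mem hx hv.1 i).1)
      hα0 (fun v hv => hv.2.1)
      (mul_pos hw₂ (hlam j)).le (mul_pos hw₂ hw₁).le (mul_pos (hlam j) hw₁).le)
    (convexOn_mul_div_sq_sub_mul ?convex
      (sum_apply_update_sub_eq_mul (fun i t => lam i * (1 - t) / mu i ^ 2) x j
        (a := -(lam j / mu j ^ 2)) fun u v => by ring)
      (sum_apply_update_sub_eq_mul (fun i t => lam i * (1 - t)) x j
        (a := -lam j) fun u v => by ring)
      hload₂
      (fun v hv => sum_nonneg fun i _ => div_nonneg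
        (mul_nonneg (hlam i).le (sub_nonneg.2 (update_apply_mem hx hv.1 i).2)) (sq_nonneg _))
      (fun v hv => sum_nonneg fun i _ =>
        mul_nonneg (hlam i).le (sub_nonneg.2 (update_apply_mem hx hv.1 i).2))
      (sub_pos.2 hα1) (fun v hv => hv.2.2)
      (by simpa using (mul_pos hw₂ (hlam j)).le) (by simpa using (mul_pos hw₂ hw₁).le)
      (by simpa using (mul_pos (hlam j) hw₁).le))
  case convex =>
    exact (convex_Icc 0 1).inter
      ((convex_setOf_lt_of_slope hload₁ α).inter (convex_setOf_lt_of_slope hload₂ (1 - α)))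
end

section
/- Let λᵢ, μᵢ > 0, α ∈ (0,1), and let x* ∈ [0,1]ⁿ be a feasible interior point (Σλᵢx*ᵢ/μᵢ < α and Σλᵢ(1−x*ᵢ)/μᵢ < 1−α) with two indices i ≠ j such that 0 < x*ᵢ < 1 and 0 < x*ⱼ < 1 and μᵢ ≠ μⱼ. Define x(ε) by xᵢ(ε) = x*ᵢ + (μᵢ/λᵢ)ε, xⱼ(ε) = x*ⱼ − (μⱼ/λⱼ)ε, xₖ(ε) = x*ₖ otherwise, and l(ε) = f(x(ε), α) where f is the two-queue expected waiting time. Then l''(0) < 0; in particular x* cannot be a local minimizer of f(·, α). -/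
/-!
Along the path `x(ε)`, which moves load from class `j` to class `i` at the rates `μᵢ/λᵢ` and
`μⱼ/λⱼ`, both loads `Σ λₖ yₖ / μₖ` and `Σ λₖ (1 - yₖ) / μₖ` stay constant. So the denominators of
the waiting time are constant while its numerators are products of two affine functions of `ε`:
`l` is a quadratic with leading coefficient `(μᵢ - μⱼ)(1/μᵢ - 1/μⱼ)(1/D₁ + 1/D₂) / Σ λₖ < 0`,
where `D₁, D₂ > 0` are those denominators.
The path stays feasible for small `|ε|`, so a local minimum of `f` at `x` would be a local minimum
of this strictly concave quadratic.
-/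

open Filter Topology Set

theorem hasDerivAt_quadratic (a b c t : ℝ) :
    HasDerivAt (fun s => a * s ^ 2 + b * s + c) (2 * a * t + b) t :=
  ((((hasDerivAt_pow 2 t).const_mul a).add ((hasDerivAt_id' t).const_mul b)).add_const
    c).congr_deriv (by push_cast; ring)

theorem deriv_deriv_quadratic (a b c t : ℝ) :
    deriv (deriv fun s => a * s ^ 2 + b * s + c) t = 2 * a := by
  have h : deriv (fun s => a * s ^ 2 + b * s + c) = fun s => 2 * a * s + b :=
    funext fun s => (hasDerivAt_quadratic a b c s).deriv
  rw [h]
  simp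

theorem not_isLocalMin_quadratic {a : ℝ} (ha : a < 0) (b c t : ℝ) :
    ¬ IsLocalMin (fun s => a * s ^ 2 + b * s + c) t := by
  intro hmin
  have hcrit : 2 * a * t + b = 0 := hmin.hasDerivAt_eq_zero (hasDerivAt_quadratic a b c t)
  obtain ⟨s, hle, hne⟩ := ((hmin.filter_mono nhdsWithin_le_nhds).and
    (self_mem_nhdsWithin : {t}ᶜ ∈ 𝓝[≠] t)).exists
  have hsq : 0 < (s - t) ^ 2 := sq_pos_of_ne_zero (sub_ne_zero.2 hne)
  have hdiff : a * s ^ 2 + b * s + c - (a * t ^ 2 + b * t + c) = a * (s - t) ^ 2 := by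
    linear_combination (s - t) * hcrit
  have : a * t ^ 2 + b * t + c ≤ a * s ^ 2 + b * s + c := hle
  nlinarith [mul_neg_of_neg_of_pos ha hsq]

theorem sub_mul_inv_sub_inv_neg {a b : ℝ} (ha : 0 < a) (hb : 0 < b) (hab : a ≠ b) :
    (a - b) * (a⁻¹ - b⁻¹) < 0 := by
  have h : (a - b) * (a⁻¹ - b⁻¹) = -((a - b) ^ 2 / (a * b)) := by field_simp; ring
  rw [h, neg_neg_iff_pos]
  exact div_pos (sq_pos_of_ne_zero (sub_ne_zero.2 hab)) (mul_pos ha hb)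

section Transfer

variable {n : ℕ} (x : Fin n → ℝ) (i j : Fin n) (p q : ℝ)

def transfer (ε : ℝ) : Fin n → ℝ :=
  fun k => if k = i then x i + p * ε else if k = j then x j - q * ε else x k

theorem transfer_zero : transfer x i j p q 0 = x := by
  funext k
  unfold transfer
  split_ifs with hi hj <;> simp [*]

theorem continuous_transfer : Continuous (transfer x i j p q) :=
  continuous_pi fun k => by unfold transfer; split_ifs <;> fun_prop

variable {i j}

theorem sum_mul_transfer (hij : i ≠ j) (w : Fin n → ℝ) (ε : ℝ) :
    ∑ k, w k * transfer x i j p q ε k = ∑ k, w k * x k + ε * (w i * p - w j * q) := by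
  rw [← sub_eq_iff_eq_add', ← Finset.sum_sub_distrib,
    Fintype.sum_eq_add i j hij fun k hk => by simp [transfer, hk.1, hk.2]]
  simp [transfer, hij.symm]
  ring

theorem sum_mul_one_sub_transfer (hij : i ≠ j) (w : Fin n → ℝ) (ε : ℝ) :
    ∑ k, w k * (1 - transfer x i j p q ε k) =
      ∑ k, w k * (1 - x k) - ε * (w i * p - w j * q) := by
  simp only [mul_one_sub, Finset.sum_sub_distrib, sum_mul_transfer x p q hij]
  ring

theorem eventually_transfer_mem_Icc (hx : ∀ k, x k ∈ Icc (0 : ℝ) 1)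
    (hi : x i ∈ Ioo (0 : ℝ) 1) (hj : x j ∈ Ioo (0 : ℝ) 1) :
    ∀ᶠ ε in 𝓝 0, ∀ k, transfer x i j p q ε k ∈ Icc (0 : ℝ) 1 := by
  rw [eventually_all]
  intro k
  by_cases hk : k = i ∨ k = j
  · have hxk : x k ∈ Ioo (0 : ℝ) 1 := by rcases hk with rfl | rfl <;> assumption
    have hcont := ((continuous_apply k).comp (continuous_transfer x i j p q)).tendsto 0
    rw [Function.comp_apply, transfer_zero] at hcont
    exact (hcont.eventually (Ioo_mem_nhds hxk.1 hxk.2)).mono fun _ h => Ioo_subset_Icc_self h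
  · obtain ⟨hki, hkj⟩ := not_or.1 hk
    simp [transfer, hki, hkj, hx k]

end Transfer

section Queues

variable {n : ℕ} (lam mu : Fin n → ℝ) (α : ℝ)

noncomputable def waitingTime (y : Fin n → ℝ) : ℝ :=
  ((∑ k, lam k * y k / (mu k) ^ 2) * (∑ k, lam k * y k) /
      (α ^ 2 - α * ∑ k, lam k * y k / mu k) +
    (∑ k, lam k * (1 - y k) / (mu k) ^ 2) * (∑ k, lam k * (1 - y k)) /
      ((1 - α) ^ 2 - (1 - α) * ∑ k, lam k * (1 - y k) / mu k)) /
    (∑ k, lam k)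

def feasibleSet : Set (Fin n → ℝ) :=
  {y | (∀ k, y k ∈ Icc (0 : ℝ) 1) ∧ ∑ k, lam k * y k / mu k < α ∧
    ∑ k, lam k * (1 - y k) / mu k < 1 - α}

variable {lam mu} (x : Fin n → ℝ) {i j : Fin n}

theorem sum_div_transfer (hlam : ∀ k, lam k ≠ 0) (hij : i ≠ j) (c : Fin n → ℝ) (ε : ℝ) :
    ∑ k, lam k * transfer x i j (mu i / lam i) (mu j / lam j) ε k / c k =
      ∑ k, lam k * x k / c k + ε * (mu i / c i - mu j / c j) := by
  simp only [mul_div_right_comm (lam _), sum_mul_transfer x _ _ hij]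
  simp only [div_mul_div_comm, mul_comm (lam _), mul_div_mul_right _ _ (hlam _)]

theorem sum_one_sub_div_transfer (hlam : ∀ k, lam k ≠ 0) (hij : i ≠ j) (c : Fin n → ℝ)
    (ε : ℝ) :
    ∑ k, lam k * (1 - transfer x i j (mu i / lam i) (mu j / lam j) ε k) / c k =
      ∑ k, lam k * (1 - x k) / c k - ε * (mu i / c i - mu j / c j) := by
  simp only [mul_div_right_comm (lam _), sum_mul_one_sub_transfer x _ _ hij]
  simp only [div_mul_div_comm, mul_comm (lam _), mul_div_mul_right _ _ (hlam _)]

theorem sum_div_mu_transfer (hlam : ∀ k, lam k ≠ 0) (hmu : ∀ k, mu k ≠ 0) (hij : i ≠ j)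
    (ε : ℝ) :
    ∑ k, lam k * transfer x i j (mu i / lam i) (mu j / lam j) ε k / mu k =
      ∑ k, lam k * x k / mu k := by
  rw [sum_div_transfer x hlam hij, div_self (hmu i), div_self (hmu j), sub_self, mul_zero,
    add_zero]

theorem sum_one_sub_div_mu_transfer (hlam : ∀ k, lam k ≠ 0) (hmu : ∀ k, mu k ≠ 0)
    (hij : i ≠ j) (ε : ℝ) :
    ∑ k, lam k * (1 - transfer x i j (mu i / lam i) (mu j / lam j) ε k) / mu k =
      ∑ k, lam k * (1 - x k) / mu k := by
  rw [sum_one_sub_div_transfer x hlam hij, div_self (hmu i), div_self (hmu j), sub_self,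
    mul_zero, sub_zero]

theorem waitingTime_transfer_eq_quadratic (hlam : ∀ k, lam k ≠ 0) (hmu : ∀ k, mu k ≠ 0)
    (hij : i ≠ j) :
    ∃ b c : ℝ, ∀ ε, waitingTime lam mu α (transfer x i j (mu i / lam i) (mu j / lam j) ε) =
      (mu i - mu j) * ((mu i)⁻¹ - (mu j)⁻¹) *
          ((α ^ 2 - α * ∑ k, lam k * x k / mu k)⁻¹ +
            ((1 - α) ^ 2 - (1 - α) * ∑ k, lam k * (1 - x k) / mu k)⁻¹) / (∑ k, lam k) * ε ^ 2 +
        b * ε + c := by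
  have hinv : ∀ k, mu k / mu k ^ 2 = (mu k)⁻¹ := fun k => by field_simp [hmu k]
  have hA := sum_div_transfer (mu := mu) x hlam hij fun _ => 1
  have hA' := sum_one_sub_div_transfer (mu := mu) x hlam hij fun _ => 1
  have hB := sum_div_transfer (mu := mu) x hlam hij fun k => mu k ^ 2
  have hB' := sum_one_sub_div_transfer (mu := mu) x hlam hij fun k => mu k ^ 2
  simp only [div_one] at hA hA'
  simp only [hinv] at hB hB'
  set S := ∑ k, lam k * x k / mu k
  set T := ∑ k, lam k * (1 - x k) / mu k
  set A := ∑ k, lam k * x k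
  set A' := ∑ k, lam k * (1 - x k)
  set B := ∑ k, lam k * x k / mu k ^ 2
  set B' := ∑ k, lam k * (1 - x k) / mu k ^ 2
  set d := (mu i)⁻¹ - (mu j)⁻¹
  refine ⟨((B * (mu i - mu j) + A * d) / (α ^ 2 - α * S) -
      (B' * (mu i - mu j) + A' * d) / ((1 - α) ^ 2 - (1 - α) * T)) / ∑ k, lam k,
    (B * A / (α ^ 2 - α * S) + B' * A' / ((1 - α) ^ 2 - (1 - α) * T)) / ∑ k, lam k,
    fun ε => ?_⟩
  rw [waitingTime, sum_div_mu_transfer x hlam hmu hij, sum_one_sub_div_mu_transfer x hlam hmu hij,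
    hA, hA', hB, hB']
  ring

theorem tendsto_transfer_nhdsWithin_feasibleSet (hlam : ∀ k, lam k ≠ 0)
    (hmu : ∀ k, mu k ≠ 0) (hij : i ≠ j) (hx : x ∈ feasibleSet lam mu α)
    (hi : x i ∈ Ioo (0 : ℝ) 1) (hj : x j ∈ Ioo (0 : ℝ) 1) :
    Tendsto (transfer x i j (mu i / lam i) (mu j / lam j)) (𝓝 0)
      (𝓝[feasibleSet lam mu α] x) := by
  obtain ⟨hxIcc, hload, hload'⟩ := hx
  refine tendsto_nhdsWithin_iff.2 ⟨?_, ?_⟩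
  · simpa only [transfer_zero] using (continuous_transfer x i j _ _).tendsto 0
  · filter_upwards [eventually_transfer_mem_Icc x _ _ hxIcc hi hj] with ε hε
    exact ⟨hε, by rwa [sum_div_mu_transfer x hlam hmu hij],
      by rwa [sum_one_sub_div_mu_transfer x hlam hmu hij]⟩

end Queues

/-- Perturbing two fractional coordinates along the stability-preserving
direction makes the waiting time strictly concave at `0`: `l''(0) < 0`, so an
interior point with two fractional coordinates and distinct service rates is
not a local minimizer. -/
theorem stmt_11 (n : ℕ) (lam mu : Fin n → ℝ) (hlam : ∀ k, 0 < lam k)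
    (hmu : ∀ k, 0 < mu k) (α : ℝ) (hα : α ∈ Set.Ioo (0 : ℝ) 1)
    (x : Fin n → ℝ) (hxIcc : ∀ k, x k ∈ Set.Icc (0 : ℝ) 1)
    (hfeas1 : ∑ k, lam k * x k / mu k < α)
    (hfeas2 : ∑ k, lam k * (1 - x k) / mu k < 1 - α)
    (i j : Fin n) (hij : i ≠ j)
    (hi : 0 < x i ∧ x i < 1) (hj : 0 < x j ∧ x j < 1) (hmuij : mu i ≠ mu j)
    (f : (Fin n → ℝ) → ℝ)
    (hf : ∀ y : Fin n → ℝ, f y =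
      ((∑ k, lam k * y k / (mu k) ^ 2) * (∑ k, lam k * y k) /
          (α ^ 2 - α * ∑ k, lam k * y k / mu k) +
        (∑ k, lam k * (1 - y k) / (mu k) ^ 2) * (∑ k, lam k * (1 - y k)) /
          ((1 - α) ^ 2 - (1 - α) * ∑ k, lam k * (1 - y k) / mu k)) /
        (∑ k, lam k))
    (l : ℝ → ℝ)
    (hl : ∀ ε : ℝ, l ε = f (fun k =>
      if k = i then x i + mu i / lam i * ε
      else if k = j then x j - mu j / lam j * ε else x k)) :
    deriv (deriv l) 0 < 0 ∧
      ¬ IsLocalMinOn f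
        {y : Fin n → ℝ | (∀ k, y k ∈ Set.Icc (0 : ℝ) 1) ∧
          ∑ k, lam k * y k / mu k < α ∧
          ∑ k, lam k * (1 - y k) / mu k < 1 - α} x := by
  obtain rfl : f = waitingTime lam mu α := funext hf
  have hlam₀ : ∀ k, lam k ≠ 0 := fun k => (hlam k).ne'
  have hmu₀ : ∀ k, mu k ≠ 0 := fun k => (hmu k).ne'
  obtain ⟨b, c, hquad⟩ := waitingTime_transfer_eq_quadratic α x hlam₀ hmu₀ hij
  replace hquad : waitingTime lam mu α ∘ transfer x i j (mu i / lam i) (mu j / lam j) =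
      fun ε => _ * ε ^ 2 + b * ε + c := funext hquad
  have hl' : l = waitingTime lam mu α ∘ transfer x i j (mu i / lam i) (mu j / lam j) := funext hl
  have hD : 0 < α ^ 2 - α * ∑ k, lam k * x k / mu k := by nlinarith [hα.1]
  have hD' : 0 < (1 - α) ^ 2 - (1 - α) * ∑ k, lam k * (1 - x k) / mu k := by nlinarith [hα.2]
  have hL : 0 < ∑ k, lam k := Finset.sum_pos (fun k _ => hlam k) ⟨i, Finset.mem_univ i⟩
  have hlead := div_neg_of_neg_of_pos (mul_neg_of_neg_of_pos
    (sub_mul_inv_sub_inv_neg (hmu i) (hmu j) hmuij) (add_pos (inv_pos.2 hD) (inv_pos.2 hD'))) hL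
  refine ⟨by rw [hl', hquad, deriv_deriv_quadratic]; linarith, fun hmin => ?_⟩
  have hloc : IsLocalMin (waitingTime lam mu α ∘ transfer x i j (mu i / lam i) (mu j / lam j)) 0 :=
    IsMinFilter.comp_tendsto (by rwa [transfer_zero])
      (tendsto_transfer_nhdsWithin_feasibleSet α x hlam₀ hmu₀ hij ⟨hxIcc, hfeas1, hfeas2⟩ hi hj)
  rw [hquad] at hloc
  exact not_isLocalMin_quadratic hlead b c 0 hloc
end
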